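/- arXiv:2003.03042 — 2 statements merged into one kernel-verified Lean document; each statement's English description precedes it below -/
import Mathlib

section
/- The population mean of the subgroup inverse probability weighted treatment-effect contrast equals the g-formula contrast: for every measurable subgroup w ⊆ 𝒳, E[ 1{X ∈ w} · ( A·Y / e₁(X) − (1 − A)·Y / (1 − e₁(X)) ) ] = ∫_{{X ∈ w}} ( m₁(X) − m₀(X) ) dP, where e₁ is a version of the propensity score for treatment a = 1 with ε ≤ e₁(X) ≤ 1 − ε almost surely, and m₁, m₀ are versions of the outcome regressions E[Y | X, A = 1] and E[Y | X, A = 0]. -/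
/-!
Both arms are instances of one identity for a treatment indicator `T`, score `e` and regression
`m`. Writing `𝒢` for the σ-algebra generated by `X`, the outcome-regression hypothesis says that
`T·Y` and `T·m(X)` have the same integral over every `𝒢`-set, and the propensity hypothesis says
the same of `T` and `e(X)`. Two such functions can be exchanged inside an integral against any
`𝒢`-measurable weight (they have the same conditional expectation given `𝒢`), so with the weight
`1_w(X)/e(X)`, bounded by positivity,
`E[1_w(X) T Y / e(X)] = E[1_w(X) m(X) T / e(X)] = E[1_w(X) m(X) e(X) / e(X)] = ∫_{X ∈ w} m(X)`.
Treatment `A` with score `e₁` and control `1 - A` with score `1 - e₁` give the two terms.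
-/

open MeasureTheory

theorem integral_mul_eq_of_forall_setIntegral_eq {Ω : Type*} {m m₀ : MeasurableSpace Ω}
    {μ : Measure Ω} (hm : m ≤ m₀) [SigmaFinite (μ.trim hm)] {f g h : Ω → ℝ}
    (hf : Integrable f μ) (hg : Integrable g μ)
    (hfg : ∀ s, MeasurableSet[m] s → ∫ x in s, f x ∂μ = ∫ x in s, g x ∂μ)
    (hh : AEStronglyMeasurable[m] h μ) (hhf : Integrable (h * f) μ)
    (hhg : Integrable (h * g) μ) :
    ∫ x, h x * f x ∂μ = ∫ x, h x * g x ∂μ := by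
  have hcond : μ[g | m] =ᵐ[μ] μ[f | m] :=
    ae_eq_condExp_of_forall_setIntegral_eq hm hf (fun _ _ _ => integrable_condExp.integrableOn)
      (fun s hs _ => by rw [setIntegral_condExp hm hg hs, hfg s hs])
      stronglyMeasurable_condExp.aestronglyMeasurable
  calc ∫ x, h x * f x ∂μ = ∫ x, (μ[h * f | m]) x ∂μ := (integral_condExp hm).symm
    _ = ∫ x, (μ[h * g | m]) x ∂μ := by
      refine integral_congr_ae ?_
      filter_upwards [condExp_mul_of_aestronglyMeasurable_left hh hhf hf,
        condExp_mul_of_aestronglyMeasurable_left hh hhg hg, hcond] with x hxf hxg hx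
      rw [hxf, hxg, Pi.mul_apply, Pi.mul_apply, hx]
    _ = ∫ x, h x * g x ∂μ := integral_condExp hm

theorem setIntegral_mul_eq_setIntegral_inter_of_zero_or_one {Ω : Type*} [MeasurableSpace Ω]
    {μ : Measure Ω} {T : Ω → ℝ} (hT : Measurable T) (hT01 : ∀ ω, T ω = 0 ∨ T ω = 1)
    (f : Ω → ℝ) (s : Set Ω) :
    ∫ ω in s, T ω * f ω ∂μ = ∫ ω in s ∩ {ω | T ω = 1}, f ω ∂μ := by
  have hTf : (fun ω => T ω * f ω) = {ω | T ω = 1}.indicator f := by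
    ext ω
    rcases hT01 ω with h | h <;> simp [h]
  rw [hTf]
  exact setIntegral_indicator (hT (measurableSet_singleton 1))

theorem setIntegral_one_sub_mul_eq_setIntegral_inter_of_zero_or_one {Ω : Type*}
    [MeasurableSpace Ω] {μ : Measure Ω} {T : Ω → ℝ} (hT : Measurable T)
    (hT01 : ∀ ω, T ω = 0 ∨ T ω = 1) (f : Ω → ℝ) (s : Set Ω) :
    ∫ ω in s, (1 - T ω) * f ω ∂μ = ∫ ω in s ∩ {ω | T ω = 0}, f ω ∂μ := by
  have hTf : (fun ω => (1 - T ω) * f ω) = {ω | T ω = 0}.indicator f := by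
    ext ω
    rcases hT01 ω with h | h <;> simp [h]
  rw [hTf]
  exact setIntegral_indicator (hT (measurableSet_singleton 0))

theorem norm_indicator_inv_le {𝒳 : Type*} {e : 𝒳 → ℝ} {ε : ℝ} (hε : 0 < ε) (w : Set 𝒳)
    {x : 𝒳} (hx : ε ≤ e x) :
    ‖w.indicator (fun x => (e x)⁻¹) x‖ ≤ ε⁻¹ := by
  by_cases hxw : x ∈ w
  · rw [Set.indicator_of_mem hxw, norm_inv, Real.norm_of_nonneg (hε.trans_le hx).le]
    exact inv_anti₀ hε hx
  · simp [hxw, hε.le]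

theorem indicator_mul_div_eq_mul {Ω 𝒳 : Type*} {X : Ω → 𝒳} {T Y : Ω → ℝ} {e : 𝒳 → ℝ}
    (w : Set 𝒳) :
    (X ⁻¹' w).indicator (fun ω => T ω * Y ω / e (X ω))
      = fun ω => w.indicator (fun x => (e x)⁻¹) (X ω) * (T ω * Y ω) := by
  ext ω
  by_cases hxw : X ω ∈ w <;> simp [hxw, div_eq_inv_mul]

section InverseProbabilityWeighting

variable {Ω 𝒳 : Type*} [MeasurableSpace Ω] [MeasurableSpace 𝒳] {P : Measure Ω}
  {X : Ω → 𝒳} {T Y : Ω → ℝ} {e m : 𝒳 → ℝ} {ε : ℝ}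

theorem integrable_indicator_mul_div (hX : Measurable X)
    (hT : AEStronglyMeasurable T P) (hT1 : ∀ᵐ ω ∂P, ‖T ω‖ ≤ 1) (hY : Integrable Y P)
    (he : Measurable e) (hε : 0 < ε) (hpos : ∀ᵐ ω ∂P, ε ≤ e (X ω))
    {w : Set 𝒳} (hw : MeasurableSet w) :
    Integrable ((X ⁻¹' w).indicator (fun ω => T ω * Y ω / e (X ω))) P := by
  rw [indicator_mul_div_eq_mul]
  exact (hY.bdd_mul hT hT1).bdd_mul ((he.inv.indicator hw).comp hX).aestronglyMeasurable
    (hpos.mono fun ω => norm_indicator_inv_le hε w)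

theorem integral_indicator_mul_div_eq_setIntegral [IsFiniteMeasure P] (hX : Measurable X)
    (hT : AEStronglyMeasurable T P) (hT1 : ∀ᵐ ω ∂P, ‖T ω‖ ≤ 1) (hY : Integrable Y P)
    (he : Measurable e) (heint : Integrable (fun ω => e (X ω)) P)
    (hε : 0 < ε) (hpos : ∀ᵐ ω ∂P, ε ≤ e (X ω))
    (hm : Measurable m) (hmint : Integrable (fun ω => m (X ω)) P)
    (hprop : ∀ B, MeasurableSet B → ∫ ω in X ⁻¹' B, T ω ∂P = ∫ ω in X ⁻¹' B, e (X ω) ∂P)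
    (hOR : ∀ B, MeasurableSet B →
      ∫ ω in X ⁻¹' B, T ω * Y ω ∂P = ∫ ω in X ⁻¹' B, T ω * m (X ω) ∂P)
    {w : Set 𝒳} (hw : MeasurableSet w) :
    ∫ ω, (X ⁻¹' w).indicator (fun ω => T ω * Y ω / e (X ω)) ω ∂P
      = ∫ ω in X ⁻¹' w, m (X ω) ∂P := by
  set h : Ω → ℝ := fun ω => w.indicator (fun x => (e x)⁻¹) (X ω)
  have hh : Measurable[MeasurableSpace.comap X ‹_›] h :=
    (he.inv.indicator hw).comp (comap_measurable X)
  have hh_bound : ∀ᵐ ω ∂P, ‖h ω‖ ≤ ε⁻¹ := hpos.mono fun ω => norm_indicator_inv_le hε w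
  have hhP : AEStronglyMeasurable h P := (hh.mono hX.comap_le le_rfl).aestronglyMeasurable
  have hTint : Integrable T P := (integrable_const 1).mono' hT hT1
  have hTY : Integrable (fun ω => T ω * Y ω) P := hY.bdd_mul hT hT1
  have hTm : Integrable (fun ω => T ω * m (X ω)) P := hmint.bdd_mul hT hT1
  have hhm : Integrable (fun ω => h ω * m (X ω)) P := hmint.bdd_mul hhP hh_bound
  have hcomap {f g : Ω → ℝ}
      (hfg : ∀ B, MeasurableSet B → ∫ ω in X ⁻¹' B, f ω ∂P = ∫ ω in X ⁻¹' B, g ω ∂P) :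
      ∀ s, MeasurableSet[MeasurableSpace.comap X ‹_›] s → ∫ ω in s, f ω ∂P = ∫ ω in s, g ω ∂P := by
    rintro _ ⟨B, hB, rfl⟩
    exact hfg B hB
  have hweight_e : (fun ω => h ω * m (X ω) * e (X ω)) =ᵐ[P] (X ⁻¹' w).indicator (m ∘ X) := by
    filter_upwards [hpos] with ω hω
    by_cases hxw : X ω ∈ w
    · have he_ne : e (X ω) ≠ 0 := (hε.trans_le hω).ne'
      simp only [hxw, Set.indicator_of_mem, Set.mem_preimage, Function.comp_apply, h]
      field_simp
    · simp [h, hxw]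
  calc ∫ ω, (X ⁻¹' w).indicator (fun ω => T ω * Y ω / e (X ω)) ω ∂P
      = ∫ ω, h ω * (T ω * Y ω) ∂P := by
        rw [indicator_mul_div_eq_mul]
    _ = ∫ ω, h ω * (T ω * m (X ω)) ∂P :=
        integral_mul_eq_of_forall_setIntegral_eq hX.comap_le hTY hTm (hcomap hOR)
          hh.aestronglyMeasurable (hTY.bdd_mul hhP hh_bound) (hTm.bdd_mul hhP hh_bound)
    _ = ∫ ω, h ω * m (X ω) * T ω ∂P := by
        congr 1 with ω
        ring
    _ = ∫ ω, h ω * m (X ω) * e (X ω) ∂P :=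
        integral_mul_eq_of_forall_setIntegral_eq hX.comap_le hTint heint (hcomap hprop)
          (hh.mul (hm.comp (comap_measurable X))).aestronglyMeasurable
          (hhm.mul_bdd hT hT1) ((integrable_indicator_iff (hX hw)).2 hmint.integrableOn |>.congr
            hweight_e.symm)
    _ = ∫ ω in X ⁻¹' w, m (X ω) ∂P := by
        rw [integral_congr_ae hweight_e, integral_indicator (hX hw)]
        rfl

theorem integral_indicator_ipw_contrast_eq [IsFiniteMeasure P] (hX : Measurable X)
    (hT : AEStronglyMeasurable T P) (hT01 : ∀ ω, T ω = 0 ∨ T ω = 1) (hY : Integrable Y P)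
    (he : Measurable e) (heint : Integrable (fun ω => e (X ω)) P)
    (hε : 0 < ε) (hpos : ∀ᵐ ω ∂P, ε ≤ e (X ω) ∧ e (X ω) ≤ 1 - ε)
    {m₁ m₀ : 𝒳 → ℝ} (hm₁ : Measurable m₁) (hm₁int : Integrable (fun ω => m₁ (X ω)) P)
    (hm₀ : Measurable m₀) (hm₀int : Integrable (fun ω => m₀ (X ω)) P)
    (hprop : ∀ B, MeasurableSet B → ∫ ω in X ⁻¹' B, T ω ∂P = ∫ ω in X ⁻¹' B, e (X ω) ∂P)
    (hOR₁ : ∀ B, MeasurableSet B →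
      ∫ ω in X ⁻¹' B, T ω * Y ω ∂P = ∫ ω in X ⁻¹' B, T ω * m₁ (X ω) ∂P)
    (hOR₀ : ∀ B, MeasurableSet B →
      ∫ ω in X ⁻¹' B, (1 - T ω) * Y ω ∂P = ∫ ω in X ⁻¹' B, (1 - T ω) * m₀ (X ω) ∂P)
    {w : Set 𝒳} (hw : MeasurableSet w) :
    ∫ ω, (X ⁻¹' w).indicator
        (fun ω => T ω * Y ω / e (X ω) - (1 - T ω) * Y ω / (1 - e (X ω))) ω ∂P
      = ∫ ω in X ⁻¹' w, (m₁ (X ω) - m₀ (X ω)) ∂P := by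
  have hT1 : ∀ᵐ ω ∂P, ‖T ω‖ ≤ 1 := ae_of_all _ fun ω => by
    rcases hT01 ω with h | h <;> simp [h]
  have hTc1 : ∀ᵐ ω ∂P, ‖1 - T ω‖ ≤ 1 := ae_of_all _ fun ω => by
    rcases hT01 ω with h | h <;> simp [h]
  have hTc : AEStronglyMeasurable (fun ω => 1 - T ω) P := aestronglyMeasurable_const.sub hT
  have hTint : Integrable T P := (integrable_const 1).mono' hT hT1
  have hec : Measurable fun x => 1 - e x := measurable_const.sub he
  have hecint : Integrable (fun ω => 1 - e (X ω)) P := (integrable_const 1).sub heint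
  have hpos₁ : ∀ᵐ ω ∂P, ε ≤ e (X ω) := hpos.mono fun _ h => h.1
  have hpos₀ : ∀ᵐ ω ∂P, ε ≤ 1 - e (X ω) := hpos.mono fun _ h => by linarith [h.2]
  have hprop₀ (B : Set 𝒳) (hB : MeasurableSet B) :
      ∫ ω in X ⁻¹' B, 1 - T ω ∂P = ∫ ω in X ⁻¹' B, 1 - e (X ω) ∂P := by
    rw [integral_sub (integrable_const 1).integrableOn hTint.integrableOn,
      integral_sub (integrable_const 1).integrableOn heint.integrableOn, hprop B hB]
  calc _ = ∫ ω, ((X ⁻¹' w).indicator (fun ω => T ω * Y ω / e (X ω)) ω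
        - (X ⁻¹' w).indicator (fun ω => (1 - T ω) * Y ω / (1 - e (X ω))) ω) ∂P := by
        congr 1 with ω
        exact congrFun (Set.indicator_sub _ _ _) ω
    _ = ∫ ω in X ⁻¹' w, m₁ (X ω) ∂P - ∫ ω in X ⁻¹' w, m₀ (X ω) ∂P := by
        rw [integral_sub (integrable_indicator_mul_div hX hT hT1 hY he hε hpos₁ hw)
            (integrable_indicator_mul_div hX hTc hTc1 hY hec hε hpos₀ hw),
          integral_indicator_mul_div_eq_setIntegral hX hT hT1 hY he heint hε hpos₁ hm₁ hm₁int
            hprop hOR₁ hw,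
          integral_indicator_mul_div_eq_setIntegral hX hTc hTc1 hY hec hecint hε hpos₀ hm₀
            hm₀int hprop₀ hOR₀ hw]
    _ = ∫ ω in X ⁻¹' w, (m₁ (X ω) - m₀ (X ω)) ∂P :=
        (integral_sub hm₁int.integrableOn hm₀int.integrableOn).symm

end InverseProbabilityWeighting

theorem ipw_contrast_eq_gformula_contrast_general
    {Ω : Type*} [MeasurableSpace Ω] (P : Measure Ω) [IsProbabilityMeasure P]
    {𝒳 : Type*} [MeasurableSpace 𝒳]
    (X : Ω → 𝒳) (hX : Measurable X)
    (A : Ω → ℝ) (hA : Measurable A) (hA01 : ∀ ω, A ω = 0 ∨ A ω = 1)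
    (Y : Ω → ℝ) (hYint : Integrable Y P)
    -- a version of the propensity score for treatment a = 1
    (e1 : 𝒳 → ℝ) (he1 : Measurable e1)
    (he1PS : ∀ B : Set 𝒳, MeasurableSet B →
      ∫ ω in X ⁻¹' B, e1 (X ω) ∂P = (P (X ⁻¹' B ∩ {ω | A ω = 1})).toReal)
    -- positivity
    (ε : ℝ) (hε : 0 < ε)
    (hpos : ∀ᵐ ω ∂P, ε ≤ e1 (X ω) ∧ e1 (X ω) ≤ 1 - ε)
    -- a version of the outcome regression E[Y | X, A = 1]
    (m1 : 𝒳 → ℝ) (hm1 : Measurable m1)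
    (hm1int : Integrable (fun ω => m1 (X ω)) P)
    (hm1OR : ∀ B : Set 𝒳, MeasurableSet B →
      ∫ ω in X ⁻¹' B ∩ {ω | A ω = 1}, Y ω ∂P
        = ∫ ω in X ⁻¹' B ∩ {ω | A ω = 1}, m1 (X ω) ∂P)
    -- a version of the outcome regression E[Y | X, A = 0]
    (m0 : 𝒳 → ℝ) (hm0 : Measurable m0)
    (hm0int : Integrable (fun ω => m0 (X ω)) P)
    (hm0OR : ∀ B : Set 𝒳, MeasurableSet B →
      ∫ ω in X ⁻¹' B ∩ {ω | A ω = 0}, Y ω ∂P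
        = ∫ ω in X ⁻¹' B ∩ {ω | A ω = 0}, m0 (X ω) ∂P)
    -- the subgroup
    (w : Set 𝒳) (hw : MeasurableSet w) :
    ∫ ω, (X ⁻¹' w).indicator
        (fun ω' => A ω' * Y ω' / e1 (X ω')
          - (1 - A ω') * Y ω' / (1 - e1 (X ω'))) ω ∂P
      = ∫ ω in X ⁻¹' w, (m1 (X ω) - m0 (X ω)) ∂P := by
  have he1int : Integrable (fun ω => e1 (X ω)) P :=
    (integrable_const 1).mono' (he1.comp hX).aestronglyMeasurable <| hpos.mono fun ω h => by
      rw [Real.norm_eq_abs, abs_le]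
      constructor <;> linarith [h.1, h.2]
  refine integral_indicator_ipw_contrast_eq hX hA.aestronglyMeasurable hA01 hYint he1 he1int hε
    hpos hm1 hm1int hm0 hm0int (fun B hB => ?_) (fun B hB => ?_) (fun B hB => ?_) hw
  · simpa [he1PS B hB, Measure.real] using
      setIntegral_mul_eq_setIntegral_inter_of_zero_or_one (μ := P) hA hA01 1 (X ⁻¹' B)
  · simp only [setIntegral_mul_eq_setIntegral_inter_of_zero_or_one hA hA01, hm1OR B hB]
  · simp only [setIntegral_one_sub_mul_eq_setIntegral_inter_of_zero_or_one hA hA01, hm0OR B hB]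

/-- The population mean of the subgroup inverse probability weighted
treatment-effect contrast equals the g-formula contrast:
`E[1{X ∈ w} (A·Y/e₁(X) − (1−A)·Y/(1−e₁(X)))] = ∫_{X ∈ w} (m₁(X) − m₀(X)) dP`. -/
theorem ipw_contrast_eq_gformula_contrast
    {Ω : Type*} [MeasurableSpace Ω] (P : Measure Ω) [IsProbabilityMeasure P]
    {𝒳 : Type*} [MeasurableSpace 𝒳]
    (X : Ω → 𝒳) (hX : Measurable X)
    (A : Ω → ℝ) (hA : Measurable A) (hA01 : ∀ ω, A ω = 0 ∨ A ω = 1)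
    (Y : Ω → ℝ) (hY : Measurable Y) (hYint : Integrable Y P)
    -- a version of the propensity score for treatment a = 1
    (e1 : 𝒳 → ℝ) (he1 : Measurable e1)
    (he1PS : ∀ B : Set 𝒳, MeasurableSet B →
      ∫ ω in X ⁻¹' B, e1 (X ω) ∂P = (P (X ⁻¹' B ∩ {ω | A ω = 1})).toReal)
    -- positivity
    (ε : ℝ) (hε : 0 < ε)
    (hpos : ∀ᵐ ω ∂P, ε ≤ e1 (X ω) ∧ e1 (X ω) ≤ 1 - ε)
    -- a version of the outcome regression E[Y | X, A = 1]
    (m1 : 𝒳 → ℝ) (hm1 : Measurable m1)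
    (hm1int : Integrable (fun ω => m1 (X ω)) P)
    (hm1OR : ∀ B : Set 𝒳, MeasurableSet B →
      ∫ ω in X ⁻¹' B ∩ {ω | A ω = 1}, Y ω ∂P
        = ∫ ω in X ⁻¹' B ∩ {ω | A ω = 1}, m1 (X ω) ∂P)
    -- a version of the outcome regression E[Y | X, A = 0]
    (m0 : 𝒳 → ℝ) (hm0 : Measurable m0)
    (hm0int : Integrable (fun ω => m0 (X ω)) P)
    (hm0OR : ∀ B : Set 𝒳, MeasurableSet B →
      ∫ ω in X ⁻¹' B ∩ {ω | A ω = 0}, Y ω ∂P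
        = ∫ ω in X ⁻¹' B ∩ {ω | A ω = 0}, m0 (X ω) ∂P)
    -- the subgroup
    (w : Set 𝒳) (hw : MeasurableSet w) :
    ∫ ω, (X ⁻¹' w).indicator
        (fun ω' => A ω' * Y ω' / e1 (X ω')
          - (1 - A ω') * Y ω' / (1 - e1 (X ω'))) ω ∂P
      = ∫ ω in X ⁻¹' w, (m1 (X ω) - m0 (X ω)) ∂P :=
  ipw_contrast_eq_gformula_contrast_general P X hX A hA hA01 Y hYint e1 he1 he1PS ε hε hpos m1 hm1
    hm1int hm1OR m0 hm0 hm0int hm0OR w hw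
end

section
/- Consistency of the subgroup inverse probability weighting estimator with known propensity score: let (Xᵢ, Aᵢ, Yᵢ), i ≥ 1, be i.i.d. copies of (X, A, Y) (with associated potential outcomes satisfying consistency, mean exchangeability and positivity), let w ⊆ 𝒳 be a measurable subgroup with P(X ∈ w) > 0, and let e_a be a version of the propensity score with ε ≤ e_a(X) ≤ 1 − ε almost surely. Then, almost surely, ( Σ_{i=1}^{n} 1{Xᵢ ∈ w, Aᵢ = a} · Yᵢ / e_a(Xᵢ) ) / ( Σ_{i=1}^{n} 1{Xᵢ ∈ w} ) converges as n → ∞ to E[Y^a | X ∈ w] = (1/P(X ∈ w)) ∫_{{X ∈ w}} Y^a dP. -/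
/-!
On `{A = a}` consistency replaces `Y` by `Y^a`. Mean exchangeability and the defining property
of the propensity score both say that a function of `X` is a version of a conditional
expectation given `X` (for exchangeability, under `P` restricted to `{A = a}`), so they survive
multiplication by functions of `X`: exchangeability turns `1{A = a} 1{X ∈ w} Y^a / e_a(X)` into
`1{A = a} 1{X ∈ w} ν_a(X) / e_a(X)`, and the propensity score replaces `1{A = a}` by `e_a(X)`,
which cancels. Hence the IPW summand has mean `∫_{X ∈ w} ν_a(X) = ∫_{X ∈ w} Y^a`, and the strong
law of large numbers for the numerator and the denominator, each divided by `n`, gives the limit.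
-/

open MeasureTheory Filter Topology ProbabilityTheory

theorem integral_comp_mul_eq_of_setIntegral_preimage_eq
    {Ω 𝒳 : Type*} [MeasurableSpace Ω] [MeasurableSpace 𝒳] {μ : Measure Ω} [IsFiniteMeasure μ]
    {X : Ω → 𝒳} (hX : Measurable X) {f : Ω → ℝ} {g h : 𝒳 → ℝ}
    (hf : Integrable f μ) (hg : Measurable g) (hgX : Integrable (fun ω => g (X ω)) μ)
    (hfg : ∀ B, MeasurableSet B → ∫ ω in X ⁻¹' B, f ω ∂μ = ∫ ω in X ⁻¹' B, g (X ω) ∂μ)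
    (hh : Measurable h) (hhf : Integrable (fun ω => h (X ω) * f ω) μ) :
    ∫ ω, h (X ω) * f ω ∂μ = ∫ ω, h (X ω) * g (X ω) ∂μ := by
  have hm := hX.comap_le
  have hgX_condExp : (fun ω => g (X ω)) =ᵐ[μ] μ[f | MeasurableSpace.comap X inferInstance] := by
    refine ae_eq_condExp_of_forall_setIntegral_eq hm hf (fun _ _ _ => hgX.integrableOn) ?_
      (hg.comp (comap_measurable X)).aestronglyMeasurable
    rintro _ ⟨B, hB, rfl⟩ -
    exact (hfg B hB).symm
  have hpull := condExp_mul_of_stronglyMeasurable_left (m := MeasurableSpace.comap X inferInstance)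
    (hh.comp (comap_measurable X)).stronglyMeasurable hhf hf
  calc ∫ ω, h (X ω) * f ω ∂μ
      = ∫ ω, μ[(fun ω => h (X ω)) * f | MeasurableSpace.comap X inferInstance] ω ∂μ :=
        (integral_condExp hm).symm
    _ = ∫ ω, h (X ω) * g (X ω) ∂μ := by
        refine integral_congr_ae (hpull.trans ?_)
        filter_upwards [hgX_condExp] with ω hω
        simp [hω]

theorem ae_eq_potentialOutcome_of_treatment_eq {Ω : Type*} [MeasurableSpace Ω] {P : Measure Ω}
    {A Y Y1 Y0 Ya : Ω → ℝ} {a : ℝ} (ha : a = 0 ∨ a = 1) (hYa : Ya = if a = 1 then Y1 else Y0)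
    (hcons : ∀ᵐ ω ∂P, Y ω = A ω * Y1 ω + (1 - A ω) * Y0 ω) :
    ∀ᵐ ω ∂P, A ω = a → Y ω = Ya ω := by
  filter_upwards [hcons] with ω hω hAa
  rcases ha with rfl | rfl <;> simp [hYa, hω, hAa]

theorem MeasureTheory.Integrable.div_of_ae_ge {Ω : Type*} [MeasurableSpace Ω] {μ : Measure Ω}
    {f g : Ω → ℝ}(hf : Integrable f μ) (hg : AEMeasurable g μ) {ε : ℝ} (hε : 0 < ε)
    (hg_ge : ∀ᵐ ω ∂μ, ε ≤ g ω) : Integrable (fun ω => f ω / g ω) μ := by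
  have hg_inv : ∀ᵐ ω ∂μ, ‖(g ω)⁻¹‖ ≤ ε⁻¹ := by
    filter_upwards [hg_ge] with ω hω
    rw [norm_inv, Real.norm_of_nonneg (hε.le.trans hω)]
    exact inv_anti₀ hε hω
  simpa only [div_eq_mul_inv] using
    hf.mul_bdd (g := fun ω => (g ω)⁻¹) hg.inv.aestronglyMeasurable hg_inv

theorem integral_ipw_eq_setIntegral
    {Ω 𝒳 : Type*} [MeasurableSpace Ω] [MeasurableSpace 𝒳] {P : Measure Ω} [IsFiniteMeasure P]
    {X : Ω → 𝒳} (hX : Measurable X) {S : Set Ω} (hS : MeasurableSet S)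
    {Y Ya : Ω → ℝ} (hYS : ∀ᵐ ω ∂P, ω ∈ S → Y ω = Ya ω) (hYa : Integrable Ya P)
    {e : 𝒳 → ℝ} (he : Measurable e) (heX : Integrable (fun ω => e (X ω)) P)
    (hePS : ∀ B, MeasurableSet B → ∫ ω in X ⁻¹' B, e (X ω) ∂P = (P (X ⁻¹' B ∩ S)).toReal)
    {ν : 𝒳 → ℝ} (hν : Measurable ν) (hνX : Integrable (fun ω => ν (X ω)) P)
    (hνCE : ∀ B, MeasurableSet B → ∫ ω in X ⁻¹' B, Ya ω ∂P = ∫ ω in X ⁻¹' B, ν (X ω) ∂P)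
    (hexch : ∀ B, MeasurableSet B →
      ∫ ω in X ⁻¹' B ∩ S, Ya ω ∂P = ∫ ω in X ⁻¹' B ∩ S, ν (X ω) ∂P)
    {ε : ℝ} (hε : 0 < ε) (hpos : ∀ᵐ ω ∂P, ε ≤ e (X ω)) {w : Set 𝒳} (hw : MeasurableSet w) :
    ∫ ω, (X ⁻¹' w ∩ S).indicator (fun ω => Y ω / e (X ω)) ω ∂P = ∫ ω in X ⁻¹' w, Ya ω ∂P := by
  set q : 𝒳 → ℝ := w.indicator fun x => (e x)⁻¹
  have hq : Measurable q := he.inv.indicator hw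
  have hqX_le : ∀ᵐ ω ∂P, ‖q (X ω)‖ ≤ ε⁻¹ := by
    filter_upwards [hpos] with ω hω
    by_cases hxw : X ω ∈ w
    · simpa [q, hxw, abs_of_pos (hε.trans_le hω)] using inv_anti₀ hε hω
    · simp [q, hxw, hε.le]
  have hqν : Integrable (fun ω => q (X ω) * ν (X ω)) P :=
    hνX.bdd_mul (hq.comp hX).aestronglyMeasurable hqX_le
  have h_consistency : ∫ ω, (X ⁻¹' w ∩ S).indicator (fun ω => Y ω / e (X ω)) ω ∂P
      = ∫ ω in S, q (X ω) * Ya ω ∂P := by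
    rw [← integral_indicator hS]
    refine integral_congr_ae ?_
    filter_upwards [hYS] with ω hω
    by_cases hωS : ω ∈ S <;> by_cases hxw : X ω ∈ w <;>
      simp [q, hωS, hxw, hω, div_eq_inv_mul]
  have h_exchangeability : ∫ ω in S, q (X ω) * Ya ω ∂P = ∫ ω in S, q (X ω) * ν (X ω) ∂P := by
    refine integral_comp_mul_eq_of_setIntegral_preimage_eq hX hYa.restrict hν hνX.restrict
      (fun B hB => ?_) hq (hYa.bdd_mul (hq.comp hX).aestronglyMeasurable hqX_le).restrict
    rw [Measure.restrict_restrict (hX hB)]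
    exact hexch B hB
  have h_propensity : ∫ ω in S, q (X ω) * ν (X ω) ∂P
      = ∫ ω, (q * ν) (X ω) * e (X ω) ∂P := by
    have hind : (fun ω => (q * ν) (X ω) * S.indicator 1 ω)
        = S.indicator fun ω => q (X ω) * ν (X ω) := by
      ext ω
      by_cases hωS : ω ∈ S <;> simp [hωS]
    rw [← integral_indicator hS, ← hind]
    refine integral_comp_mul_eq_of_setIntegral_preimage_eq hX
      ((integrable_const 1).indicator hS) he heX (fun B hB => ?_) (hq.mul hν)
      (hind ▸ hqν.indicator hS)
    rw [integral_indicator_one hS, measureReal_restrict_apply hS, Set.inter_comm, hePS B hB,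
      measureReal_def]
  have h_weight : ∫ ω, (q * ν) (X ω) * e (X ω) ∂P = ∫ ω in X ⁻¹' w, ν (X ω) ∂P := by
    rw [← integral_indicator (hX hw)]
    refine integral_congr_ae ?_
    filter_upwards [hpos] with ω hω
    have he_ne : e (X ω) ≠ 0 := (hε.trans_le hω).ne'
    by_cases hxw : X ω ∈ w <;> simp [q, hxw, mul_right_comm _ (ν (X ω)), he_ne]
  rw [h_consistency, h_exchangeability, h_propensity, h_weight, hνCE w hw]

theorem ae_tendsto_average_comp_of_iIndepFun_identDistrib
    {Ω α : Type*} [MeasurableSpace Ω] [MeasurableSpace α] {P : Measure Ω}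
    {Z : Ω → α} {Zs : ℕ → Ω → α} (hindep : iIndepFun Zs P) (hident : ∀ i, IdentDistrib (Zs i) Z P P)
    {f : α → ℝ} (hf : Measurable f) (hfZ : Integrable (fun ω => f (Z ω)) P) :
    ∀ᵐ ω ∂P, Tendsto (fun n : ℕ => (∑ i ∈ Finset.range n, f (Zs i ω)) / n) atTop
      (𝓝 (∫ ω, f (Z ω) ∂P)) := by
  have hident_f : ∀ i, IdentDistrib (fun ω => f (Zs i ω)) (fun ω => f (Z ω)) P P :=
    fun i => (hident i).comp hf
  have hslln := strong_law_ae_real (fun i ω => f (Zs i ω))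
    ((hident_f 0).integrable_iff.mpr hfZ)
    (fun i j hij => (hindep.comp (fun _ => f) fun _ => hf).indepFun hij)
    (fun i => (hident_f i).trans (hident_f 0).symm)
  rwa [(hident_f 0).integral_eq] at hslln

theorem tendsto_sum_div_sum_of_tendsto_average {u v : ℕ → ℝ} {α β : ℝ}
    (hu : Tendsto (fun n : ℕ => (∑ i ∈ Finset.range n, u i) / n) atTop (𝓝 α))
    (hv : Tendsto (fun n : ℕ => (∑ i ∈ Finset.range n, v i) / n) atTop (𝓝 β)) (hβ : β ≠ 0) :
    Tendsto (fun n : ℕ => (∑ i ∈ Finset.range n, u i) / ∑ i ∈ Finset.range n, v i) atTop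
      (𝓝 (α / β)) := by
  refine (hu.div hv hβ).congr' ?_
  filter_upwards [eventually_ne_atTop 0] with n hn
  exact div_div_div_cancel_right₀ (Nat.cast_ne_zero.mpr hn) _ _

theorem ipw_estimator_consistency_general
    {Ω : Type*} [MeasurableSpace Ω] (P : Measure Ω) [IsProbabilityMeasure P]
    {𝒳 : Type*} [MeasurableSpace 𝒳]
    (X : Ω → 𝒳) (hX : Measurable X)
    (A : Ω → ℝ) (hA : Measurable A)
    (Y : Ω → ℝ) (hYint : Integrable Y P)
    (a : ℝ) (ha : a = 0 ∨ a = 1)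
    (Y1 Y0 : Ω → ℝ)
    (hY1int : Integrable Y1 P) (hY0int : Integrable Y0 P)
    (Ya : Ω → ℝ) (hYa : Ya = if a = 1 then Y1 else Y0)
    -- consistency of potential outcomes
    (hcons : ∀ᵐ ω ∂P, Y ω = A ω * Y1 ω + (1 - A ω) * Y0 ω)
    -- a version of the propensity score
    (e : 𝒳 → ℝ) (he : Measurable e)
    (hePS : ∀ B : Set 𝒳, MeasurableSet B →
      ∫ ω in X ⁻¹' B, e (X ω) ∂P = (P (X ⁻¹' B ∩ {ω | A ω = a})).toReal)
    -- a version of E[Y^a | X]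
    (ν : 𝒳 → ℝ) (hν : Measurable ν)
    (hνint : Integrable (fun ω => ν (X ω)) P)
    (hνCE : ∀ B : Set 𝒳, MeasurableSet B →
      ∫ ω in X ⁻¹' B, Ya ω ∂P = ∫ ω in X ⁻¹' B, ν (X ω) ∂P)
    -- mean exchangeability
    (hexch : ∀ B : Set 𝒳, MeasurableSet B →
      ∫ ω in X ⁻¹' B ∩ {ω | A ω = a}, Ya ω ∂P
        = ∫ ω in X ⁻¹' B ∩ {ω | A ω = a}, ν (X ω) ∂P)
    -- positivity
    (ε : ℝ) (hε : 0 < ε)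
    (hpos : ∀ᵐ ω ∂P, ε ≤ e (X ω) ∧ e (X ω) ≤ 1 - ε)
    -- the subgroup, with P(X ∈ w) > 0
    (w : Set 𝒳) (hw : MeasurableSet w)
    (hwpos : 0 < (P (X ⁻¹' w)).toReal)
    -- i.i.d. copies of (X, A, Y)
    (Xs : ℕ → Ω → 𝒳) (As : ℕ → Ω → ℝ) (Ys : ℕ → Ω → ℝ)
    (hindep : ProbabilityTheory.iIndepFun
      (fun i ω => (Xs i ω, As i ω, Ys i ω)) P)
    (hident : ∀ i, ProbabilityTheory.IdentDistrib
      (fun ω => (Xs i ω, As i ω, Ys i ω)) (fun ω => (X ω, A ω, Y ω)) P P) :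
    ∀ᵐ ω ∂P, Tendsto (fun n : ℕ =>
        (∑ i ∈ Finset.range n,
            ((Xs i ⁻¹' w) ∩ {ω' | As i ω' = a}).indicator
              (fun ω' => Ys i ω' / e (Xs i ω')) ω)
          / (∑ i ∈ Finset.range n, (Xs i ⁻¹' w).indicator (fun _ => (1 : ℝ)) ω))
      atTop
      (𝓝 ((1 / (P (X ⁻¹' w)).toReal) * ∫ ω' in X ⁻¹' w, Ya ω' ∂P)) := by
  have hYa_int : Integrable Ya P := by rw [hYa]; split_ifs <;> assumption
  have heX : Integrable (fun ω => e (X ω)) P := by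
    refine .of_bound (he.comp hX).aestronglyMeasurable 1 ?_
    filter_upwards [hpos] with ω hω
    rw [Real.norm_eq_abs, abs_le]
    constructor <;> linarith
  set ipw : 𝒳 × ℝ × ℝ → ℝ := {p | p.1 ∈ w ∧ p.2.1 = a}.indicator fun p => p.2.2 / e p.1
  set unit : 𝒳 × ℝ × ℝ → ℝ := {p | p.1 ∈ w}.indicator 1
  have h_ipw : Measurable ipw :=
    ((measurable_snd.comp measurable_snd).div (he.comp measurable_fst)).indicator
      ((measurable_fst hw).inter ((measurable_fst.comp measurable_snd) (measurableSet_singleton a)))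
  have h_unit : Measurable unit := measurable_const.indicator (measurable_fst hw)
  have h_ipw_int : Integrable (fun ω => ipw (X ω, A ω, Y ω)) P :=
    (hYint.div_of_ae_ge (he.comp hX).aemeasurable hε (hpos.mono fun _ h => h.1)).indicator
      ((hX hw).inter (hA (measurableSet_singleton a)))
  have h_ipw_mean : ∫ ω, ipw (X ω, A ω, Y ω) ∂P = ∫ ω in X ⁻¹' w, Ya ω ∂P :=
    integral_ipw_eq_setIntegral hX (hA (measurableSet_singleton a))
      (ae_eq_potentialOutcome_of_treatment_eq ha hYa hcons) hYa_int he heX hePS hν hνint hνCE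
      hexch hε (hpos.mono fun _ h => h.1) hw
  have h_unit_mean : ∫ ω, unit (X ω, A ω, Y ω) ∂P = (P (X ⁻¹' w)).toReal :=
    integral_indicator_one (hX hw)
  filter_upwards [ae_tendsto_average_comp_of_iIndepFun_identDistrib hindep hident h_ipw h_ipw_int,
    ae_tendsto_average_comp_of_iIndepFun_identDistrib hindep hident h_unit
      ((integrable_const 1).indicator (hX hw))] with ω h_num h_den
  rw [h_ipw_mean] at h_num
  rw [h_unit_mean] at h_den
  rw [one_div_mul_eq_div]
  exact tendsto_sum_div_sum_of_tendsto_average h_num h_den hwpos.ne'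

/-- Consistency of the subgroup inverse probability weighting estimator
with known propensity score: the ratio
`(Σᵢ 1{Xᵢ ∈ w, Aᵢ = a} Yᵢ / e_a(Xᵢ)) / (Σᵢ 1{Xᵢ ∈ w})` converges almost surely to
`E[Y^a | X ∈ w]`. -/
theorem ipw_estimator_consistency
    {Ω : Type*} [MeasurableSpace Ω] (P : Measure Ω) [IsProbabilityMeasure P]
    {𝒳 : Type*} [MeasurableSpace 𝒳]
    (X : Ω → 𝒳) (hX : Measurable X)
    (A : Ω → ℝ) (hA : Measurable A) (hA01 : ∀ ω, A ω = 0 ∨ A ω = 1)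
    (Y : Ω → ℝ) (hY : Measurable Y) (hYint : Integrable Y P)
    (a : ℝ) (ha : a = 0 ∨ a = 1)
    (Y1 Y0 : Ω → ℝ) (hY1m : Measurable Y1) (hY0m : Measurable Y0)
    (hY1int : Integrable Y1 P) (hY0int : Integrable Y0 P)
    (Ya : Ω → ℝ) (hYa : Ya = if a = 1 then Y1 else Y0)
    -- consistency of potential outcomes
    (hcons : ∀ᵐ ω ∂P, Y ω = A ω * Y1 ω + (1 - A ω) * Y0 ω)
    -- a version of the propensity score
    (e : 𝒳 → ℝ) (he : Measurable e)
    (hePS : ∀ B : Set 𝒳, MeasurableSet B →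
      ∫ ω in X ⁻¹' B, e (X ω) ∂P = (P (X ⁻¹' B ∩ {ω | A ω = a})).toReal)
    -- a version of E[Y^a | X]
    (ν : 𝒳 → ℝ) (hν : Measurable ν)
    (hνint : Integrable (fun ω => ν (X ω)) P)
    (hνCE : ∀ B : Set 𝒳, MeasurableSet B →
      ∫ ω in X ⁻¹' B, Ya ω ∂P = ∫ ω in X ⁻¹' B, ν (X ω) ∂P)
    -- mean exchangeability
    (hexch : ∀ B : Set 𝒳, MeasurableSet B →
      ∫ ω in X ⁻¹' B ∩ {ω | A ω = a}, Ya ω ∂P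
        = ∫ ω in X ⁻¹' B ∩ {ω | A ω = a}, ν (X ω) ∂P)
    -- positivity
    (ε : ℝ) (hε : 0 < ε)
    (hpos : ∀ᵐ ω ∂P, ε ≤ e (X ω) ∧ e (X ω) ≤ 1 - ε)
    -- the subgroup, with P(X ∈ w) > 0
    (w : Set 𝒳) (hw : MeasurableSet w)
    (hwpos : 0 < (P (X ⁻¹' w)).toReal)
    -- i.i.d. copies of (X, A, Y)
    (Xs : ℕ → Ω → 𝒳) (As : ℕ → Ω → ℝ) (Ys : ℕ → Ω → ℝ)
    (hmeas : ∀ i, Measurable (fun ω => (Xs i ω, As i ω, Ys i ω)))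
    (hindep : ProbabilityTheory.iIndepFun
      (fun i ω => (Xs i ω, As i ω, Ys i ω)) P)
    (hident : ∀ i, ProbabilityTheory.IdentDistrib
      (fun ω => (Xs i ω, As i ω, Ys i ω)) (fun ω => (X ω, A ω, Y ω)) P P) :
    ∀ᵐ ω ∂P, Tendsto (fun n : ℕ =>
        (∑ i ∈ Finset.range n,
            ((Xs i ⁻¹' w) ∩ {ω' | As i ω' = a}).indicator
              (fun ω' => Ys i ω' / e (Xs i ω')) ω)
          / (∑ i ∈ Finset.range n, (Xs i ⁻¹' w).indicator (fun _ => (1 : ℝ)) ω))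
      atTop
      (𝓝 ((1 / (P (X ⁻¹' w)).toReal) * ∫ ω' in X ⁻¹' w, Ya ω' ∂P)) :=
  ipw_estimator_consistency_general P X hX A hA Y hYint a ha Y1 Y0 hY1int hY0int Ya hYa hcons e he
    hePS ν hν hνint hνCE hexch ε hε hpos w hw hwpos Xs As Ys hindep hident
end
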